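/- Let U ⊆ ℂ be open and let ψ : U → ℝ, s : U → (0, ∞), φ : U → ℝ be twice continuously differentiable, and set σ = s·e^{iφ}. If the derived Codazzi–Mainardi equation ∂ψ = −∂̄σ + 2ξσ/(1 + ξξ̄) holds on U (where ∂, ∂̄ are Wirtinger derivatives), then on U one has the second-order identity e^{−iφ}·∂∂ψ − i·e^{−iφ}·∂φ·∂ψ = −∂∂̄s − i·∂s·∂̄φ − i·s·∂∂̄φ + 2ξ·∂s/(1 + ξξ̄) + 2s/(1 + ξξ̄)². -/

import Mathlib

/-- The Wirtinger derivative `∂f = ½(∂f/∂x − i·∂f/∂y)`. -/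
noncomputable def wirt (f : ℂ → ℂ) (z : ℂ) : ℂ :=
  (1 / 2 : ℂ) * (fderiv ℝ f z 1 - Complex.I * fderiv ℝ f z Complex.I)

/-- The conjugate Wirtinger derivative `∂̄f = ½(∂f/∂x + i·∂f/∂y)`. -/
noncomputable def wirtBar (f : ℂ → ℂ) (z : ℂ) : ℂ :=
  (1 / 2 : ℂ) * (fderiv ℝ f z 1 + Complex.I * fderiv ℝ f z Complex.I)

/-! With `σ = s·e^{iφ}` expanded by the Leibniz rule, the Codazzi–Mainardi relation says
`∂ψ = F·e^{iφ}` on `U`, where `F = 2s·ξ/(1+ξξ̄) − ∂̄s − i·s·∂̄φ`. Differentiating once more,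
`∂∂ψ = (∂F + i·∂φ·F)·e^{iφ}`, so the left-hand side of the identity is just `∂F`; this is
expanded by the Leibniz rule and `∂(ξ/(1+ξξ̄)) = 1/(1+ξξ̄)²`. -/

open Complex ComplexConjugate

section Wirtinger

variable {f g : ℂ → ℂ} {z : ℂ}

theorem wirt_congr_of_eventuallyEq (h : f =ᶠ[nhds z] g) : wirt f z = wirt g z := by
  rw [wirt, wirt, h.fderiv_eq]

theorem wirt_const (c : ℂ) : wirt (fun _ => c) z = 0 := by
  simp [wirt]

theorem wirt_id : wirt (fun w => w) z = 1 := by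
  norm_num [wirt]

theorem wirt_conj : wirt (fun w => conj w) z = 0 := by
  have : fderiv ℝ (fun w => conj w) z = (conjCLE : ℂ →L[ℝ] ℂ) := conjCLE.fderiv
  simp [wirt, this]

theorem wirt_add (hf : DifferentiableAt ℝ f z) (hg : DifferentiableAt ℝ g z) :
    wirt (fun w => f w + g w) z = wirt f z + wirt g z := by
  simp only [wirt, fderiv_fun_add hf hg, add_apply]
  ring

theorem wirt_sub (hf : DifferentiableAt ℝ f z) (hg : DifferentiableAt ℝ g z) :
    wirt (fun w => f w - g w) z = wirt f z - wirt g z := by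
  simp only [wirt, fderiv_fun_sub hf hg, sub_apply]
  ring

theorem wirt_mul (hf : DifferentiableAt ℝ f z) (hg : DifferentiableAt ℝ g z) :
    wirt (fun w => f w * g w) z = wirt f z * g z + f z * wirt g z := by
  simp only [wirt, fderiv_fun_mul hf hg, add_apply, smul_apply, smul_eq_mul]
  ring

theorem wirtBar_mul (hf : DifferentiableAt ℝ f z) (hg : DifferentiableAt ℝ g z) :
    wirtBar (fun w => f w * g w) z = wirtBar f z * g z + f z * wirtBar g z := by
  simp only [wirtBar, fderiv_fun_mul hf hg, add_apply, smul_apply, smul_eq_mul]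
  ring

theorem wirt_comp_of_hasDerivAt {g' : ℂ} (hg : HasDerivAt g g' (f z))
    (hf : DifferentiableAt ℝ f z) : wirt (fun w => g (f w)) z = g' * wirt f z := by
  have h := (hg.comp_hasFDerivAt z hf.hasFDerivAt).fderiv
  simp only [Function.comp_def] at h
  simp only [wirt, h, smul_apply, smul_eq_mul]
  ring

theorem wirtBar_comp_of_hasDerivAt {g' : ℂ} (hg : HasDerivAt g g' (f z))
    (hf : DifferentiableAt ℝ f z) : wirtBar (fun w => g (f w)) z = g' * wirtBar f z := by
  have h := (hg.comp_hasFDerivAt z hf.hasFDerivAt).fderiv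
  simp only [Function.comp_def] at h
  simp only [wirtBar, h, smul_apply, smul_eq_mul]
  ring

theorem wirt_const_mul (c : ℂ) (hf : DifferentiableAt ℝ f z) :
    wirt (fun w => c * f w) z = c * wirt f z := by
  simp only [wirt, fderiv_const_mul hf c, smul_apply, smul_eq_mul]
  ring

theorem wirtBar_const_mul (c : ℂ) (hf : DifferentiableAt ℝ f z) :
    wirtBar (fun w => c * f w) z = c * wirtBar f z := by
  simp only [wirtBar, fderiv_const_mul hf c, smul_apply, smul_eq_mul]
  ring

theorem wirt_cexp (hf : DifferentiableAt ℝ f z) :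
    wirt (fun w => exp (f w)) z = exp (f z) * wirt f z :=
  wirt_comp_of_hasDerivAt (hasDerivAt_exp _) hf

theorem wirtBar_cexp (hf : DifferentiableAt ℝ f z) :
    wirtBar (fun w => exp (f w)) z = exp (f z) * wirtBar f z :=
  wirtBar_comp_of_hasDerivAt (hasDerivAt_exp _) hf

theorem wirt_inv (hf : DifferentiableAt ℝ f z) (hz : f z ≠ 0) :
    wirt (fun w => (f w)⁻¹) z = -wirt f z / f z ^ 2 := by
  rw [wirt_comp_of_hasDerivAt (g := fun u => u⁻¹) (hasDerivAt_inv hz) hf]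
  ring

theorem ContDiffAt.differentiableAt_wirtBar (hf : ContDiffAt ℝ 2 f z) :
    DifferentiableAt ℝ (wirtBar f) z := by
  have h : DifferentiableAt ℝ (fderiv ℝ f) z :=
    (hf.fderiv_right (m := 1) (by norm_num)).differentiableAt one_ne_zero
  unfold wirtBar
  fun_prop

theorem wirt_mul_exp_I_mul (hf : DifferentiableAt ℝ f z) (hg : DifferentiableAt ℝ g z) :
    wirt (fun w => f w * exp (I * g w)) z = (wirt f z + I * wirt g z * f z) * exp (I * g z) := by
  rw [wirt_mul hf (by fun_prop), wirt_cexp (by fun_prop), wirt_const_mul I hg]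
  ring

theorem wirtBar_mul_exp_I_mul (hf : DifferentiableAt ℝ f z) (hg : DifferentiableAt ℝ g z) :
    wirtBar (fun w => f w * exp (I * g w)) z =
      (wirtBar f z + I * wirtBar g z * f z) * exp (I * g z) := by
  rw [wirtBar_mul hf (by fun_prop), wirtBar_cexp (by fun_prop), wirtBar_const_mul I hg]
  ring

end Wirtinger

theorem one_add_mul_conj_ne_zero (z : ℂ) : 1 + z * conj z ≠ 0 := by
  rw [mul_conj, ← ofReal_one, ← ofReal_add, ofReal_ne_zero]
  exact (add_pos_of_pos_of_nonneg one_pos (normSq_nonneg z)).ne'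

theorem differentiableAt_div_one_add_mul_conj (z : ℂ) :
    DifferentiableAt ℝ (fun w => w / (1 + w * conj w)) z := by
  have hconj := differentiable_conj z
  simp only [div_eq_mul_inv]
  fun_prop (disch := exact one_add_mul_conj_ne_zero z)

theorem wirt_div_one_add_mul_conj (z : ℂ) :
    wirt (fun w => w / (1 + w * conj w)) z = 1 / (1 + z * conj z) ^ 2 := by
  have hconj : DifferentiableAt ℝ (fun w : ℂ => conj w) z := differentiable_conj z
  have hD : DifferentiableAt ℝ (fun w : ℂ => 1 + w * conj w) z := by fun_prop
  have hD0 := one_add_mul_conj_ne_zero z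
  have hwirtD : wirt (fun w => 1 + w * conj w) z = conj z := by
    rw [wirt_add (by fun_prop) (by fun_prop), wirt_const, wirt_mul (by fun_prop) hconj, wirt_id,
      wirt_conj]
    ring
  simp only [div_eq_mul_inv]
  rw [wirt_mul (g := fun w => (1 + w * conj w)⁻¹) (by fun_prop) (hD.inv hD0), wirt_id,
    wirt_inv hD hD0, hwirtD]
  field_simp
  ring

/-- The factor `F` of `∂ψ = F·e^{iφ}`, with `S = s` and `Φ = φ`. -/
noncomputable def codazziFactor (S Φ : ℂ → ℂ) (w : ℂ) : ℂ :=
  2 * S w * (w / (1 + w * conj w)) - (wirtBar S w + I * (S w * wirtBar Φ w))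

section codazziFactor

variable {S Φ : ℂ → ℂ} {z : ℂ}

theorem differentiableAt_codazziFactor (hS : ContDiffAt ℝ 2 S z) (hΦ : ContDiffAt ℝ 2 Φ z) :
    DifferentiableAt ℝ (codazziFactor S Φ) z := by
  have dS := hS.differentiableAt two_ne_zero
  have dbS := hS.differentiableAt_wirtBar
  have dbΦ := hΦ.differentiableAt_wirtBar
  have hq := differentiableAt_div_one_add_mul_conj z
  unfold codazziFactor
  fun_prop

theorem wirt_codazziFactor (hS : ContDiffAt ℝ 2 S z) (hΦ : ContDiffAt ℝ 2 Φ z) :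
    wirt (codazziFactor S Φ) z =
      2 * wirt S z * (z / (1 + z * conj z)) + 2 * S z * (1 / (1 + z * conj z) ^ 2) -
        (wirt (wirtBar S) z + I * (wirt S z * wirtBar Φ z + S z * wirt (wirtBar Φ) z)) := by
  have dS := hS.differentiableAt two_ne_zero
  have dbS := hS.differentiableAt_wirtBar
  have dbΦ := hΦ.differentiableAt_wirtBar
  have hq := differentiableAt_div_one_add_mul_conj z
  unfold codazziFactor
  rw [wirt_sub (by fun_prop) (by fun_prop), wirt_mul (by fun_prop) hq,
    wirt_const_mul 2 dS, wirt_div_one_add_mul_conj, wirt_add dbS (by fun_prop),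
    wirt_const_mul I (by fun_prop), wirt_mul dS dbΦ]

theorem wirtBar_codazzi_eq (hS : DifferentiableAt ℝ S z) (hΦ : DifferentiableAt ℝ Φ z) :
    -wirtBar (fun w => S w * exp (I * Φ w)) z +
        2 * z * (S z * exp (I * Φ z)) / (1 + z * conj z) =
      codazziFactor S Φ z * exp (I * Φ z) := by
  rw [wirtBar_mul_exp_I_mul hS hΦ, codazziFactor]
  ring

end codazziFactor

theorem codazzi_mainardi_second_order_general (U : Set ℂ) (hU : IsOpen U)
    (ψ s φ : ℂ → ℝ)
    (hs : ContDiffOn ℝ 2 s U) (hφ : ContDiffOn ℝ 2 φ U)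
    (σ : ℂ → ℂ)
    (hσ : ∀ z : ℂ, σ z = (s z : ℂ) * Complex.exp (Complex.I * (φ z : ℂ)))
    (hCM : ∀ z ∈ U, wirt (fun w => (ψ w : ℂ)) z =
        -wirtBar σ z + 2 * z * σ z / (1 + z * (starRingEnd ℂ) z)) :
    ∀ z ∈ U,
      Complex.exp (-Complex.I * (φ z : ℂ)) * wirt (fun w => wirt (fun v => (ψ v : ℂ)) w) z -
        Complex.I * Complex.exp (-Complex.I * (φ z : ℂ)) *
          wirt (fun w => (φ w : ℂ)) z * wirt (fun w => (ψ w : ℂ)) z =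
      -wirt (fun w => wirtBar (fun v => (s v : ℂ)) w) z -
        Complex.I * wirt (fun w => (s w : ℂ)) z * wirtBar (fun w => (φ w : ℂ)) z -
        Complex.I * (s z : ℂ) * wirt (fun w => wirtBar (fun v => (φ v : ℂ)) w) z +
        2 * z * wirt (fun w => (s w : ℂ)) z / (1 + z * (starRingEnd ℂ) z) +
        2 * (s z : ℂ) / (1 + z * (starRingEnd ℂ) z) ^ 2 := by
  intro z hz
  have hS : ∀ w ∈ U, ContDiffAt ℝ 2 (fun v => (s v : ℂ)) w := fun w hw =>
    ofRealCLM.contDiff.contDiffAt.comp w (hs.contDiffAt (hU.mem_nhds hw))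
  have hΦ : ∀ w ∈ U, ContDiffAt ℝ 2 (fun v => (φ v : ℂ)) w := fun w hw =>
    ofRealCLM.contDiff.contDiffAt.comp w (hφ.contDiffAt (hU.mem_nhds hw))
  have hwirtψ : ∀ w ∈ U, wirt (fun v => (ψ v : ℂ)) w =
      codazziFactor (fun v => (s v : ℂ)) (fun v => (φ v : ℂ)) w * exp (I * φ w) := by
    intro w hw
    rw [hCM w hw, hσ w, funext hσ, wirtBar_codazzi_eq ((hS w hw).differentiableAt two_ne_zero)
      ((hΦ w hw).differentiableAt two_ne_zero)]
  rw [wirt_congr_of_eventuallyEq (Filter.eventually_of_mem (hU.mem_nhds hz) hwirtψ),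
    wirt_mul_exp_I_mul (differentiableAt_codazziFactor (hS z hz) (hΦ z hz))
      ((hΦ z hz).differentiableAt two_ne_zero),
    wirt_codazziFactor (hS z hz) (hΦ z hz), hwirtψ z hz, codazziFactor, neg_mul, exp_neg]
  have hD := one_add_mul_conj_ne_zero z
  field_simp
  ring

/-- Second-order consequence of the derived Codazzi–Mainardi equation: if
`σ = s·e^{iφ}` with `s > 0` and `∂ψ = −∂̄σ + 2ξσ/(1+ξξ̄)` on an open set `U`, then
`e^{−iφ}·∂∂ψ − i·e^{−iφ}·∂φ·∂ψ
  = −∂∂̄s − i·∂s·∂̄φ − i·s·∂∂̄φ + 2ξ·∂s/(1+ξξ̄) + 2s/(1+ξξ̄)²` on `U`. -/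
theorem codazzi_mainardi_second_order (U : Set ℂ) (hU : IsOpen U)
    (ψ s φ : ℂ → ℝ)
    (hψ : ContDiffOn ℝ 2 ψ U) (hs : ContDiffOn ℝ 2 s U) (hφ : ContDiffOn ℝ 2 φ U)
    (hspos : ∀ z ∈ U, 0 < s z)
    (σ : ℂ → ℂ)
    (hσ : ∀ z : ℂ, σ z = (s z : ℂ) * Complex.exp (Complex.I * (φ z : ℂ)))
    (hCM : ∀ z ∈ U, wirt (fun w => (ψ w : ℂ)) z =
        -wirtBar σ z + 2 * z * σ z / (1 + z * (starRingEnd ℂ) z)) :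
    ∀ z ∈ U,
      Complex.exp (-Complex.I * (φ z : ℂ)) * wirt (fun w => wirt (fun v => (ψ v : ℂ)) w) z -
        Complex.I * Complex.exp (-Complex.I * (φ z : ℂ)) *
          wirt (fun w => (φ w : ℂ)) z * wirt (fun w => (ψ w : ℂ)) z =
      -wirt (fun w => wirtBar (fun v => (s v : ℂ)) w) z -
        Complex.I * wirt (fun w => (s w : ℂ)) z * wirtBar (fun w => (φ w : ℂ)) z -
        Complex.I * (s z : ℂ) * wirt (fun w => wirtBar (fun v => (φ v : ℂ)) w) z +
        2 * z * wirt (fun w => (s w : ℂ)) z / (1 + z * (starRingEnd ℂ) z) +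
        2 * (s z : ℂ) / (1 + z * (starRingEnd ℂ) z) ^ 2 :=
  codazzi_mainardi_second_order_general U hU ψ s φ hs hφ σ hσ hCM
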